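/- arXiv:1910.07826 — 5 statements merged into one kernel-verified Lean document; each statement's English description precedes it below -/
import Mathlib

section
/- For all t ∈ (0,1) and A, B ∈ ℝ≥0 with (A,B) ≠ (0,0) and A, B > 0, one has ((At/(At+B(1−t)))·log(At/(At+B(1−t)))) / (t·log t) ≥ min{A/B, B/A}. -/
/-!
Write `s = A t / (A t + B (1 - t))`; the claim is `s log s ≤ min (A/B) (B/A) · t log t`.
If `A ≤ B` then `A/B · t ≤ s ≤ t`, so `log s ≤ log t` and `s ≥ A/B · t`.
If `B ≤ A` then `t ≤ s` and `1/s = (B/A)(1/t) + (1 - B/A)`, so concavity of `log` gives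
`log s ≤ B/A · log t`. In both cases `s log s ≤ a b · t log t` follows from
`log s ≤ a log t` and `s ≥ b t`, since `log t ≤ 0`.
-/

open Real

lemma mul_log_le_of_log_le {s t a b : ℝ} (hs : 0 < s) (ht0 : 0 ≤ t) (ht1 : t ≤ 1)
    (ha : 0 ≤ a) (hlog : log s ≤ a * log t) (hts : b * t ≤ s) :
    s * log s ≤ a * b * (t * log t) := by
  have hlogt : a * log t ≤ 0 := mul_nonpos_of_nonneg_of_nonpos ha (log_nonpos ht0 ht1)
  calc s * log s ≤ s * (a * log t) := mul_le_mul_of_nonneg_left hlog hs.le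
    _ ≤ b * t * (a * log t) := mul_le_mul_of_nonpos_right hts hlogt
    _ = a * b * (t * log t) := by ring

lemma mul_log_le_log_mul_add_one_sub {c x : ℝ} (hx : 0 < x) (hc0 : 0 ≤ c) (hc1 : c ≤ 1) :
    c * log x ≤ log (c * x + (1 - c)) := by
  have h := strictConcaveOn_log_Ioi.concaveOn.2 (Set.mem_Ioi.2 hx) (Set.mem_Ioi.2 one_pos)
    hc0 (sub_nonneg.2 hc1) (add_sub_cancel c 1)
  simpa only [smul_eq_mul, log_one, mul_zero, add_zero, mul_one] using h

noncomputable def reweight (A B t : ℝ) : ℝ := A * t / (A * t + B * (1 - t))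

lemma inv_reweight {A B t : ℝ} (hA : A ≠ 0) (ht : t ≠ 0) :
    (reweight A B t)⁻¹ = B / A * t⁻¹ + (1 - B / A) := by
  rw [reweight]
  field_simp
  ring

section reweight

variable {A B t : ℝ} (hA : 0 < A) (hB : 0 < B) (ht0 : 0 < t) (ht1 : t < 1)
include hA hB ht0 ht1

lemma reweight_denom_pos : 0 < A * t + B * (1 - t) := by
  have : 0 < 1 - t := sub_pos.2 ht1
  positivity

lemma reweight_pos : 0 < reweight A B t :=
  div_pos (by positivity) (reweight_denom_pos hA hB ht0 ht1)

lemma reweight_le_self (hAB : A ≤ B) : reweight A B t ≤ t := by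
  rw [reweight, div_le_iff₀ (reweight_denom_pos hA hB ht0 ht1)]
  nlinarith [mul_nonneg (mul_nonneg (sub_nonneg.2 hAB) (sub_pos.2 ht1).le) ht0.le]

lemma div_mul_le_reweight (hAB : A ≤ B) : A / B * t ≤ reweight A B t := by
  rw [reweight, le_div_iff₀ (reweight_denom_pos hA hB ht0 ht1), div_mul_eq_mul_div,
    div_mul_eq_mul_div, div_le_iff₀ hB]
  nlinarith [mul_nonneg (mul_nonneg (mul_nonneg hA.le ht0.le) (sub_nonneg.2 hAB)) ht0.le]

lemma self_le_reweight (hBA : B ≤ A) : t ≤ reweight A B t := by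
  rw [reweight, le_div_iff₀ (reweight_denom_pos hA hB ht0 ht1)]
  nlinarith [mul_nonneg (mul_nonneg (sub_nonneg.2 hBA) (sub_pos.2 ht1).le) ht0.le]

end reweight

lemma log_reweight_le {A B t : ℝ} (hA : 0 < A) (hB : 0 < B) (ht0 : 0 < t) (hBA : B ≤ A) :
    log (reweight A B t) ≤ B / A * log t := by
  have h := mul_log_le_log_mul_add_one_sub (inv_pos.2 ht0) (div_pos hB hA).le
    ((div_le_one hA).2 hBA)
  rw [← inv_reweight hA.ne' ht0.ne', log_inv, log_inv] at h
  linarith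

theorem stmt1 (t A B : ℝ) (ht : t ∈ Set.Ioo (0:ℝ) 1) (hA : 0 < A) (hB : 0 < B) :
    min (A / B) (B / A) ≤
      (A * t / (A * t + B * (1 - t)) * Real.log (A * t / (A * t + B * (1 - t))))
        / (t * Real.log t) := by
  obtain ⟨ht0, ht1⟩ := ht
  change min (A / B) (B / A) ≤ reweight A B t * log (reweight A B t) / (t * log t)
  rw [le_div_iff_of_neg (mul_neg_of_pos_of_neg ht0 (log_neg ht0 ht1))]
  have hs := reweight_pos hA hB ht0 ht1
  rcases le_total A B with hAB | hBA
  · rw [min_eq_left ((div_le_div_iff₀ hB hA).2 (by nlinarith)), ← one_mul (A / B)]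
    exact mul_log_le_of_log_le hs ht0.le ht1.le zero_le_one
      (by rw [one_mul]; exact log_le_log hs (reweight_le_self hA hB ht0 ht1 hAB))
      (div_mul_le_reweight hA hB ht0 ht1 hAB)
  · rw [min_eq_right ((div_le_div_iff₀ hA hB).2 (by nlinarith)), ← mul_one (B / A)]
    exact mul_log_le_of_log_le hs ht0.le ht1.le (div_pos hB hA).le
      (log_reweight_le hA hB ht0 hBA)
      (by rw [one_mul]; exact self_le_reweight hA hB ht0 ht1 hBA)
end

section
/- For σ ≥ 1, the function g(t) = (σ/(σt+1−t))·log(σt/(σt+1−t)) − (log t)/σ on (0,1) is nondecreasing, and hence g(t) ≤ 0 for all t ∈ (0,1). -/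
/-!
Write `g = logRatioGap σ` and `D = σt + 1 - t`. The quotient `σt/D` has derivative `σ/D²`, so the logarithmic term
differentiates to `1/(tD)` and
`g'(t) = (σ² - D²)/(σtD²) - σ(σ-1)/D² · log(σt/D)`.
For `σ ≥ 1` and `0 < t ≤ 1` we have `σt ≤ D ≤ σ`, so both terms are nonnegative and `g` is
monotone on `(0, 1]`; since `g 1 = 0`, it is nonpositive there.
-/

open Real Set

noncomputable def logRatioGap (σ t : ℝ) : ℝ :=
  σ / (σ * t + 1 - t) * log (σ * t / (σ * t + 1 - t)) - log t / σ

noncomputable def logRatioGapDeriv (σ t : ℝ) : ℝ :=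
  (σ ^ 2 - (σ * t + 1 - t) ^ 2) / (σ * t * (σ * t + 1 - t) ^ 2)
    - σ * (σ - 1) / (σ * t + 1 - t) ^ 2 * log (σ * t / (σ * t + 1 - t))

variable {σ t : ℝ}

lemma mul_add_one_sub_pos (hσ : 1 ≤ σ) (ht : 0 ≤ t) : 0 < σ * t + 1 - t := by
  nlinarith

lemma hasDerivAt_logRatioGap (hσ : σ ≠ 0) (ht : t ≠ 0) (hD : σ * t + 1 - t ≠ 0) :
    HasDerivAt (logRatioGap σ) (logRatioGapDeriv σ t) t := by
  have hDeriv : HasDerivAt (fun s => σ * s + 1 - s) (σ - 1) t := by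
    simpa using (((hasDerivAt_id' t).const_mul σ).add_const 1).fun_sub (hasDerivAt_id' t)
  have hInv := (hDeriv.inv hD).const_mul σ
  have hQuot := ((hasDerivAt_id' t).const_mul σ).fun_div hDeriv hD
  have hLog := hQuot.log (div_ne_zero (mul_ne_zero hσ ht) hD)
  have hLogT := (hasDerivAt_log ht).div_const σ
  refine ((hInv.mul hLog).fun_sub hLogT).congr_deriv ?_
  simp only [logRatioGapDeriv, Pi.inv_apply]
  field_simp
  ring

lemma logRatioGapDeriv_nonneg (hσ : 1 ≤ σ) (ht₀ : 0 < t) (ht₁ : t ≤ 1) :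
    0 ≤ logRatioGapDeriv σ t := by
  have hD := mul_add_one_sub_pos hσ ht₀.le
  have hσt : 0 < σ * t := by positivity
  have hDσ : σ * t + 1 - t ≤ σ := by nlinarith
  have hRatio : σ * t / (σ * t + 1 - t) ≤ 1 := (div_le_one hD).2 (by linarith)
  have hFirst : 0 ≤ (σ ^ 2 - (σ * t + 1 - t) ^ 2) / (σ * t * (σ * t + 1 - t) ^ 2) :=
    div_nonneg (by nlinarith) (by positivity)
  have hSecond : 0 ≤ σ * (σ - 1) / (σ * t + 1 - t) ^ 2 :=
    div_nonneg (by nlinarith) (by positivity)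
  have hLog : log (σ * t / (σ * t + 1 - t)) ≤ 0 := log_nonpos (by positivity) hRatio
  unfold logRatioGapDeriv
  nlinarith [mul_nonpos_of_nonneg_of_nonpos hSecond hLog]

lemma monotoneOn_logRatioGap (hσ : 1 ≤ σ) : MonotoneOn (logRatioGap σ) (Ioc 0 1) := by
  have hσ₀ : σ ≠ 0 := by positivity
  have hDeriv : ∀ s ∈ Ioc (0 : ℝ) 1, HasDerivAt (logRatioGap σ) (logRatioGapDeriv σ s) s :=
    fun s hs => hasDerivAt_logRatioGap hσ₀ hs.1.ne' (mul_add_one_sub_pos hσ hs.1.le).ne'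
  refine monotoneOn_of_hasDerivWithinAt_nonneg (convex_Ioc 0 1)
    (fun s hs => (hDeriv s hs).continuousAt.continuousWithinAt)
    (fun s hs => (hDeriv s (interior_subset hs)).hasDerivWithinAt) ?_
  rw [interior_Ioc]
  exact fun s hs => logRatioGapDeriv_nonneg hσ hs.1 hs.2.le

lemma logRatioGap_one (hσ : σ ≠ 0) : logRatioGap σ 1 = 0 := by
  simp [logRatioGap, hσ]

theorem stmt2 (σ : ℝ) (hσ : 1 ≤ σ) :
    MonotoneOn
      (fun t : ℝ => σ / (σ * t + 1 - t) * Real.log (σ * t / (σ * t + 1 - t))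
        - Real.log t / σ) (Set.Ioo 0 1) ∧
    ∀ t ∈ Set.Ioo (0:ℝ) 1,
      σ / (σ * t + 1 - t) * Real.log (σ * t / (σ * t + 1 - t)) - Real.log t / σ ≤ 0 := by
  have hMono := monotoneOn_logRatioGap hσ
  refine ⟨hMono.mono Ioo_subset_Ioc_self, fun t ht => ?_⟩
  calc logRatioGap σ t ≤ logRatioGap σ 1 :=
        hMono ⟨ht.1, ht.2.le⟩ ⟨one_pos, le_rfl⟩ ht.2.le
    _ = 0 := logRatioGap_one (by positivity)
end

section
/- For σ ∈ (0,1], the function f(t) = log σ − log(1−(1−σ)t) + (1−σ)·t·log t on (0,1) is convex, and f(t) ≤ 0 for all t ∈ (0,1). -/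
/-!
Both terms `-log (1 - (1 - σ) t)` and `(1 - σ) t log t` are convex, being `-log` of an affine
function and a nonnegative multiple of `t log t`. For the sign, write
`1 - (1 - σ) t = (1 - t) • 1 + t • σ`; concavity of `log` gives `log (1 - (1 - σ) t) ≥ t log σ`,
so `f t ≤ (1 - t) log σ + (1 - σ) t log t`, a sum of two nonpositive terms.
-/

open Real Set

theorem concaveOn_log_one_sub_mul (c : ℝ) :
    ConcaveOn ℝ {t | 0 < 1 - c * t} (fun t => log (1 - c * t)) := by
  have h := strictConcaveOn_log_Ioi.concaveOn.comp_affineMap (AffineMap.lineMap (1 : ℝ) (1 - c))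
  have hg : ∀ t : ℝ, AffineMap.lineMap (1 : ℝ) (1 - c) t = 1 - c * t := fun t => by
    rw [AffineMap.lineMap_apply_ring']
    ring
  simpa only [Function.comp_def, preimage, mem_Ioi, hg] using h

theorem mul_log_le_log_one_sub_mul {σ t : ℝ} (hσ : 0 < σ) (ht₀ : 0 ≤ t) (ht₁ : t ≤ 1) :
    t * log σ ≤ log (1 - (1 - σ) * t) := by
  have h := strictConcaveOn_log_Ioi.concaveOn.2 (mem_Ioi.2 one_pos) (mem_Ioi.2 hσ)
    (sub_nonneg.2 ht₁) ht₀ (sub_add_cancel 1 t)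
  simp only [smul_eq_mul, log_one, mul_zero, zero_add, mul_one] at h
  rwa [show 1 - (1 - σ) * t = 1 - t + t * σ by ring]

theorem stmt3 (σ : ℝ) (hσ : σ ∈ Set.Ioc (0:ℝ) 1) :
    ConvexOn ℝ (Set.Ioo (0:ℝ) 1)
      (fun t : ℝ => Real.log σ - Real.log (1 - (1 - σ) * t) + (1 - σ) * t * Real.log t) ∧
    ∀ t ∈ Set.Ioo (0:ℝ) 1,
      Real.log σ - Real.log (1 - (1 - σ) * t) + (1 - σ) * t * Real.log t ≤ 0 := by
  obtain ⟨hσ₀, hσ₁⟩ := hσ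
  have hc : 0 ≤ 1 - σ := sub_nonneg.2 hσ₁
  refine ⟨?_, fun t ht => ?_⟩
  · have hpos : Ioo (0 : ℝ) 1 ⊆ {t | 0 < 1 - (1 - σ) * t} := fun t ht =>
      show 0 < 1 - (1 - σ) * t by nlinarith [mul_pos hσ₀ ht.1, ht.2]
    have hlog := (concaveOn_log_one_sub_mul (1 - σ)).subset hpos (convex_Ioo 0 1)
    have hmulLog := convexOn_mul_log.subset (fun t ht => ht.1.le) (convex_Ioo (0 : ℝ) 1)
    refine ((hlog.neg.add (hmulLog.smul hc)).add_const (log σ)).congr fun t _ => ?_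
    simp only [Pi.add_apply, Pi.neg_apply, smul_eq_mul]
    ring
  · have hconcave := mul_log_le_log_one_sub_mul hσ₀ ht.1.le ht.2.le
    have hσlog : (1 - t) * log σ ≤ 0 :=
      mul_nonpos_of_nonneg_of_nonpos (sub_nonneg.2 ht.2.le) (log_nonpos hσ₀.le hσ₁)
    have htlog : (1 - σ) * t * log t ≤ 0 :=
      mul_nonpos_of_nonneg_of_nonpos (mul_nonneg hc ht.1.le) (log_nonpos ht.1.le ht.2.le)
    linarith
end

section
/- Let Q be a privacy protocol on A = {1,…,a} with matrix Q̃ ∈ ℝ^{B×A}, all entries positive, satisfying ε-LDP, i.e. Q̃_{y|x}/Q̃_{y|x'} ≤ e^ε for all y, x, x'. For p in the interior of the simplex with all p_x > 0, let D_p = diag(1/(Q̃p)_1,…,1/(Q̃p)_b), and let J be the (a−1)×(a−1) matrix with J_{x,x'} = ∑_y (Q̃_{y|x} − Q̃_{y|a})(Q̃_{y|x'} − Q̃_{y|a})/(Q̃p)_y. Then each diagonal entry satisfies J_{x,x} ≤ (e^ε − 1)^2, and hence det(J) ≤ (e^ε − 1)^{2(a−1)}. -/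
/-!
For each output `y` the entries `Q_{y|x}` lie between `μ_y = min_x Q_{y|x}` and `e^ε μ_y`, and
`(Q p)_y ≥ μ_y` because `p` is a probability vector. Hence each summand of a diagonal entry of `J`
is at most `(e^ε - 1)² μ_y ≤ (e^ε - 1)² Q_{y|a}`, and summing the column `Q_{·|a}` gives
`(e^ε - 1)²`. Since `J = Δᵀ D_p Δ` is positive semidefinite, AM-GM on its eigenvalues gives
`det J ≤ (tr J / m)^m ≤ (e^ε - 1)^{2m}`.
-/

open Finset Matrix

theorem Finset.prod_le_pow_card_of_sum_le {ι : Type*} (s : Finset ι) {z : ι → ℝ} {C : ℝ}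
    (hz : ∀ i ∈ s, 0 ≤ z i) (h : ∑ i ∈ s, z i ≤ #s * C) : ∏ i ∈ s, z i ≤ C ^ #s := by
  rcases s.eq_empty_or_nonempty with rfl | hs
  · simp
  have hcard : (0 : ℝ) < #s := by exact_mod_cast hs.card_pos
  have hprod : 0 ≤ ∏ i ∈ s, z i := prod_nonneg hz
  have hmean : (∏ i ∈ s, z i) ^ ((#s : ℝ)⁻¹) ≤ C := by
    have amgm := Real.geom_mean_le_arith_mean_weighted s (fun _ ↦ (#s : ℝ)⁻¹) z
      (fun _ _ ↦ by positivity) (by simp [hcard.ne']) hz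
    rw [Real.finsetProd_rpow s z hz, ← mul_sum] at amgm
    exact amgm.trans ((inv_mul_le_iff₀ hcard).2 h)
  calc ∏ i ∈ s, z i = ((∏ i ∈ s, z i) ^ ((#s : ℝ)⁻¹)) ^ #s := by
        rw [← Real.rpow_natCast, ← Real.rpow_mul hprod, inv_mul_cancel₀ hcard.ne', Real.rpow_one]
    _ ≤ C ^ #s := by gcongr

theorem Matrix.PosSemidef.det_le_pow_of_diag_le {n : Type*} [Fintype n] [DecidableEq n]
    {A : Matrix n n ℝ} (hA : A.PosSemidef) {C : ℝ} (hdiag : ∀ i, A i i ≤ C) :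
    A.det ≤ C ^ Fintype.card n := by
  have htrace : ∑ i, hA.1.eigenvalues i ≤ Fintype.card n * C := by
    calc ∑ i, hA.1.eigenvalues i = A.trace := by simpa using hA.1.trace_eq_sum_eigenvalues.symm
      _ ≤ ∑ _i : n, C := sum_le_sum fun i _ ↦ hdiag i
      _ = Fintype.card n * C := by simp
  rw [show A.det = ∏ i, hA.1.eigenvalues i by simpa using hA.1.det_eq_prod_eigenvalues]
  exact prod_le_pow_card_of_sum_le univ (fun i _ ↦ hA.eigenvalues_nonneg i) htrace

theorem Matrix.posSemidef_of_sum_mul_div {ι β : Type*} [Fintype ι] [Fintype β] [DecidableEq β]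
    (d : β → ι → ℝ) {w : β → ℝ} (hw : ∀ y, 0 ≤ w y) :
    (Matrix.of fun i j ↦ ∑ y, d y i * d y j / w y).PosSemidef := by
  have hgram : (Matrix.of fun i j ↦ ∑ y, d y i * d y j / w y) =
      (of d)ᴴ * diagonal (fun y ↦ (w y)⁻¹) * of d := by
    ext i j
    rw [mul_apply]
    simp only [of_apply, mul_diagonal, conjTranspose_apply, star_trivial]
    exact sum_congr rfl fun y _ ↦ by ring
  rw [hgram]
  exact (posSemidef_diagonal_iff.2 fun y ↦ inv_nonneg.2 (hw y)).conjTranspose_mul_mul_same _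

theorem abs_sub_le_of_mem_Icc_mul {u v μ k : ℝ} (hu : u ∈ Set.Icc μ (k * μ))
    (hv : v ∈ Set.Icc μ (k * μ)) : |u - v| ≤ (k - 1) * μ := by
  obtain ⟨hu₁, hu₂⟩ := hu
  obtain ⟨hv₁, hv₂⟩ := hv
  rw [abs_sub_le_iff]
  constructor <;> linarith

section Channel

variable {α β : Type*} [Fintype α] {Q : Matrix β α ℝ} {p : α → ℝ} {ε : ℝ}

theorem le_mulVec_apply_of_forall_le {y : β} {μ : ℝ} (hμ : ∀ x, μ ≤ Q y x) (hp : ∀ x, 0 ≤ p x)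
    (hp1 : ∑ x, p x = 1) : μ ≤ (Q *ᵥ p) y :=
  calc μ = ∑ x, μ * p x := by rw [← mul_sum, hp1, mul_one]
    _ ≤ ∑ x, Q y x * p x := sum_le_sum fun x _ ↦ mul_le_mul_of_nonneg_right (hμ x) (hp x)
    _ = (Q *ᵥ p) y := rfl

theorem sq_sub_div_mulVec_le (hQpos : ∀ y x, 0 < Q y x)
    (hLDP : ∀ y x x', Q y x / Q y x' ≤ Real.exp ε) (hp : ∀ x, 0 ≤ p x) (hp1 : ∑ x, p x = 1)
    (y : β) (x a : α) :
    (Q y x - Q y a) * (Q y x - Q y a) / (Q *ᵥ p) y ≤ (Real.exp ε - 1) ^ 2 * Q y a := by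
  obtain ⟨x₀, -, hx₀⟩ := exists_min_image univ (Q y) ⟨x, mem_univ x⟩
  set μ := Q y x₀
  have hμ : 0 < μ := hQpos y x₀
  have hband : ∀ x', Q y x' ∈ Set.Icc μ (Real.exp ε * μ) := fun x' ↦
    ⟨hx₀ x' (mem_univ x'), (div_le_iff₀ hμ).1 (hLDP y x' x₀)⟩
  have hdiff : |Q y x - Q y a| ≤ (Real.exp ε - 1) * μ :=
    abs_sub_le_of_mem_Icc_mul (hband x) (hband a)
  calc (Q y x - Q y a) * (Q y x - Q y a) / (Q *ᵥ p) y
      ≤ ((Real.exp ε - 1) * μ) ^ 2 / μ := by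
        rw [← sq, ← sq_abs]
        exact div_le_div₀ (by positivity) (pow_le_pow_left₀ (abs_nonneg _) hdiff 2) hμ
          (le_mulVec_apply_of_forall_le (fun x' ↦ (hband x').1) hp hp1)
    _ = (Real.exp ε - 1) ^ 2 * μ := by field_simp
    _ ≤ (Real.exp ε - 1) ^ 2 * Q y a := by gcongr; exact (hband a).1

theorem sum_sq_sub_div_mulVec_le [Fintype β] (hQpos : ∀ y x, 0 < Q y x)
    (hcol : ∀ x, ∑ y, Q y x = 1)
    (hLDP : ∀ y x x', Q y x / Q y x' ≤ Real.exp ε) (hp : ∀ x, 0 ≤ p x) (hp1 : ∑ x, p x = 1)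
    (x a : α) :
    ∑ y, (Q y x - Q y a) * (Q y x - Q y a) / (Q *ᵥ p) y ≤ (Real.exp ε - 1) ^ 2 :=
  calc ∑ y, (Q y x - Q y a) * (Q y x - Q y a) / (Q *ᵥ p) y
      ≤ ∑ y, (Real.exp ε - 1) ^ 2 * Q y a :=
        sum_le_sum fun y _ ↦ sq_sub_div_mulVec_le hQpos hLDP hp hp1 y x a
    _ = (Real.exp ε - 1) ^ 2 := by rw [← mul_sum, hcol, mul_one]

theorem mulVec_apply_pos [Nonempty α] (hQpos : ∀ y x, 0 < Q y x) (hp : ∀ x, 0 < p x) (y : β) :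
    0 < (Q *ᵥ p) y :=
  sum_pos (fun x _ ↦ mul_pos (hQpos y x) (hp x)) univ_nonempty

end Channel

theorem stmt14_general (m b : ℕ) (ε : ℝ)
    (Q : Matrix (Fin b) (Fin (m + 1)) ℝ) (hQpos : ∀ y x, 0 < Q y x)
    (hcol : ∀ x, ∑ y, Q y x = 1)
    (hLDP : ∀ y x x', Q y x / Q y x' ≤ Real.exp ε)
    (p : Fin (m + 1) → ℝ) (hp : ∀ x, 0 < p x) (hp1 : ∑ x, p x = 1) :
    (∀ x : Fin m,
      (Matrix.of fun x x' : Fin m =>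
        ∑ y, (Q y x.castSucc - Q y (Fin.last m)) * (Q y x'.castSucc - Q y (Fin.last m))
          / Q.mulVec p y) x x ≤ (Real.exp ε - 1) ^ 2) ∧
    (Matrix.of fun x x' : Fin m =>
        ∑ y, (Q y x.castSucc - Q y (Fin.last m)) * (Q y x'.castSucc - Q y (Fin.last m))
          / Q.mulVec p y).det ≤ (Real.exp ε - 1) ^ (2 * m) := by
  have hdiag (x : Fin m) :=
    sum_sq_sub_div_mulVec_le hQpos hcol hLDP (fun x ↦ (hp x).le) hp1 x.castSucc (Fin.last m)
  have hJ := posSemidef_of_sum_mul_div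
    (fun y (x : Fin m) ↦ Q y x.castSucc - Q y (Fin.last m))
    (fun y ↦ (mulVec_apply_pos hQpos hp y).le)
  refine ⟨hdiag, ?_⟩
  simpa [pow_mul] using hJ.det_le_pow_of_diag_le hdiag

theorem stmt14 (m b : ℕ) (hm : 1 ≤ m) (ε : ℝ)
    (Q : Matrix (Fin b) (Fin (m + 1)) ℝ) (hQpos : ∀ y x, 0 < Q y x)
    (hcol : ∀ x, ∑ y, Q y x = 1)
    (hLDP : ∀ y x x', Q y x / Q y x' ≤ Real.exp ε)
    (p : Fin (m + 1) → ℝ) (hp : ∀ x, 0 < p x) (hp1 : ∑ x, p x = 1) :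
    (∀ x : Fin m,
      (Matrix.of fun x x' : Fin m =>
        ∑ y, (Q y x.castSucc - Q y (Fin.last m)) * (Q y x'.castSucc - Q y (Fin.last m))
          / Q.mulVec p y) x x ≤ (Real.exp ε - 1) ^ 2) ∧
    (Matrix.of fun x x' : Fin m =>
        ∑ y, (Q y x.castSucc - Q y (Fin.last m)) * (Q y x'.castSucc - Q y (Fin.last m))
          / Q.mulVec p y).det ≤ (Real.exp ε - 1) ^ (2 * m) :=
  stmt14_general m b ε Q hQpos hcol hLDP p hp hp1
end

section
/- Let Q be a privacy protocol on A with all entries of Q̃ positive. Then for every probability distribution p on A with all p_x ∈ (0,1) and every output y ∈ B, H(X | Y = y, P = p) / H(X | P = p) ≥ e^{-LDP(Q)}, where X ~ p and Y = Q(X). -/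
/-!
Write `c = e^{-LDP(Q)}`. Bayes' rule gives `c * p x ≤ P(X = x | Y = y)` for every `x`, and since
both sides are probability vectors also `P(X = x | Y = y) ≤ c * p x + (1 - c)`. Both endpoints of
this interval are convex combinations of `p x` with weight `c` and of `0` resp. `1`, where the
concave function `negMulLog` vanishes; so `negMulLog` of the posterior is at least
`c * negMulLog (p x)`, and summing over `x` bounds the entropy ratio below by `c`.
-/

open Real Finset

theorem ConcaveOn.mul_le_of_mem_Icc {f : ℝ → ℝ} (hf : ConcaveOn ℝ (Set.Icc 0 1) f)
    (h0 : 0 ≤ f 0) (h1 : 0 ≤ f 1) {c p r : ℝ} (hc0 : 0 ≤ c) (hc1 : c ≤ 1) (hp : p ∈ Set.Icc 0 1)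
    (hr : r ∈ Set.Icc (c * p) (c * p + (1 - c))) : c * f p ≤ f r := by
  have hcp : c * p ∈ Set.Icc (0 : ℝ) 1 := ⟨mul_nonneg hc0 hp.1, mul_le_one₀ hc1 hp.1 hp.2⟩
  have hcp' : c * p + (1 - c) ∈ Set.Icc (0 : ℝ) 1 := by
    constructor <;> nlinarith [hp.1, hp.2]
  have hlo : c * f p ≤ f (c * p) := by
    have := hf.2 hp (by simp : (0 : ℝ) ∈ Set.Icc 0 1) hc0 (sub_nonneg.2 hc1) (by ring)
    simp only [smul_eq_mul, mul_zero, add_zero] at this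
    linarith [mul_nonneg (sub_nonneg.2 hc1) h0]
  have hhi : c * f p ≤ f (c * p + (1 - c)) := by
    have := hf.2 hp (by simp : (1 : ℝ) ∈ Set.Icc 0 1) hc0 (sub_nonneg.2 hc1) (by ring)
    simp only [smul_eq_mul, mul_one] at this
    linarith [mul_nonneg (sub_nonneg.2 hc1) h1]
  exact (le_min hlo hhi).trans (hf.min_le_of_mem_Icc hcp hcp' hr)

section ProbabilityVector

variable {ι : Type*} [Fintype ι] {p r : ι → ℝ} {c : ℝ}

theorem le_mul_add_one_sub_of_forall_mul_le (hp : ∑ i, p i = 1) (hr : ∑ i, r i = 1)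
    (hle : ∀ i, c * p i ≤ r i) (i : ι) : r i ≤ c * p i + (1 - c) := by
  have hsum : ∑ j, (r j - c * p j) = 1 - c := by
    rw [sum_sub_distrib, ← mul_sum, hp, hr, mul_one]
  have := single_le_sum (fun j _ => sub_nonneg.2 (hle j)) (mem_univ i)
  linarith

theorem mul_sum_negMulLog_le_of_forall_mul_le (hc0 : 0 ≤ c) (hc1 : c ≤ 1)
    (hp0 : ∀ i, 0 ≤ p i) (hp : ∑ i, p i = 1) (hr : ∑ i, r i = 1) (hle : ∀ i, c * p i ≤ r i) :
    c * ∑ i, negMulLog (p i) ≤ ∑ i, negMulLog (r i) := by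
  have hconcave : ConcaveOn ℝ (Set.Icc 0 1) negMulLog :=
    concaveOn_negMulLog.subset Set.Icc_subset_Ici_self (convex_Icc 0 1)
  rw [mul_sum]
  refine sum_le_sum fun i _ => hconcave.mul_le_of_mem_Icc (by simp) (by simp) hc0 hc1 ?_
    ⟨hle i, le_mul_add_one_sub_of_forall_mul_le hp hr hle i⟩
  exact ⟨hp0 i, hp ▸ single_le_sum (fun j _ => hp0 j) (mem_univ i)⟩

end ProbabilityVector

theorem Real.negMulLog_pos {x : ℝ} (h0 : 0 < x) (h1 : x < 1) : 0 < negMulLog x := by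
  rw [negMulLog, neg_mul, neg_pos]
  exact mul_neg_of_pos_of_neg h0 (log_neg h0 h1)

section Posterior

variable {A : Type*} [Fintype A] {w p : A → ℝ}

/-- `posterior (Q y) p x` is `P(X = x | Y = y)` for the prior `p`. -/
noncomputable def posterior (w p : A → ℝ) (x : A) : ℝ :=
  w x * p x / ∑ x', w x' * p x'

theorem sum_posterior (h : ∑ x, w x * p x ≠ 0) : ∑ x, posterior w p x = 1 := by
  simp only [posterior, ← sum_div]
  exact div_self h

theorem sum_mul_pos_of_sum_eq_one (hw : ∀ x, 0 < w x) (hp0 : ∀ x, 0 ≤ p x)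
    (hp1 : ∑ x, p x = 1) : 0 < ∑ x, w x * p x := by
  obtain ⟨i, -, hi⟩ := exists_lt_of_sum_lt (s := univ) (f := fun _ => (0 : ℝ)) (g := p)
    (by simp [hp1])
  exact sum_pos' (fun j _ => mul_nonneg (hw j).le (hp0 j)) ⟨i, mem_univ i, mul_pos (hw i) hi⟩

theorem mul_le_posterior {c : ℝ} (hw : ∀ x, 0 < w x) (hp0 : ∀ x, 0 ≤ p x)
    (hp1 : ∑ x, p x = 1) (hc : ∀ x x', c * w x' ≤ w x) (x : A) :
    c * p x ≤ posterior w p x := by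
  have hcS : c * ∑ x', w x' * p x' ≤ w x :=
    calc c * ∑ x', w x' * p x' = ∑ x', c * w x' * p x' := by simp only [mul_sum, mul_assoc]
      _ ≤ ∑ x', w x * p x' := sum_le_sum fun x' _ => mul_le_mul_of_nonneg_right (hc x x') (hp0 x')
      _ = w x := by rw [← mul_sum, hp1, mul_one]
  rw [posterior, le_div_iff₀ (sum_mul_pos_of_sum_eq_one hw hp0 hp1)]
  linarith [mul_le_mul_of_nonneg_right hcS (hp0 x)]

end Posterior

theorem stmt16_general {A B : Type*} [Fintype A] [Fintype B] [Nonempty A] [Nonempty B]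
    (Q : B → A → ℝ) (hQpos : ∀ y x, 0 < Q y x)
    (p : A → ℝ) (hp : ∀ x, p x ∈ Set.Ioo (0:ℝ) 1) (hp1 : ∑ x, p x = 1)
    (y : B) :
    Real.exp (-Real.log (Finset.univ.sup' Finset.univ_nonempty
        (fun t : B × A × A => Q t.1 t.2.1 / Q t.1 t.2.2)))
      ≤ (∑ x, Real.negMulLog (Q y x * p x / ∑ x', Q y x' * p x'))
          / (∑ x, Real.negMulLog (p x)) := by
  set M := univ.sup' univ_nonempty fun t : B × A × A => Q t.1 t.2.1 / Q t.1 t.2.2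
  have hratio : ∀ x x', Q y x' / Q y x ≤ M := fun x x' =>
    le_sup' (fun t : B × A × A => Q t.1 t.2.1 / Q t.1 t.2.2) (mem_univ (y, x', x))
  have hM : 1 ≤ M := by
    obtain ⟨x⟩ := ‹Nonempty A›
    simpa [div_self (hQpos y x).ne'] using hratio x x
  have hM0 : 0 < M := by linarith
  have hH : 0 < ∑ x, negMulLog (p x) :=
    sum_pos (fun x _ => negMulLog_pos (hp x).1 (hp x).2) univ_nonempty
  have hp0 : ∀ x, 0 ≤ p x := fun x => (hp x).1.le
  have hlikelihood : ∀ x x', M⁻¹ * Q y x' ≤ Q y x := fun x x' => by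
    rw [inv_mul_le_iff₀ hM0, ← div_le_iff₀ (hQpos y x)]
    exact hratio x x'
  rw [exp_neg, exp_log hM0, le_div_iff₀ hH]
  exact mul_sum_negMulLog_le_of_forall_mul_le (inv_nonneg.2 hM0.le)
    (inv_le_one_of_one_le₀ hM) hp0 hp1
    (sum_posterior (sum_mul_pos_of_sum_eq_one (hQpos y) hp0 hp1).ne')
    (mul_le_posterior (hQpos y) hp0 hp1 hlikelihood)

theorem stmt16 {A B : Type*} [Fintype A] [Fintype B] [Nonempty A] [Nonempty B]
    (Q : B → A → ℝ) (hQpos : ∀ y x, 0 < Q y x) (hcol : ∀ x, ∑ y, Q y x = 1)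
    (p : A → ℝ) (hp : ∀ x, p x ∈ Set.Ioo (0:ℝ) 1) (hp1 : ∑ x, p x = 1)
    (y : B) :
    Real.exp (-Real.log (Finset.univ.sup' Finset.univ_nonempty
        (fun t : B × A × A => Q t.1 t.2.1 / Q t.1 t.2.2)))
      ≤ (∑ x, Real.negMulLog (Q y x * p x / ∑ x', Q y x' * p x'))
          / (∑ x, Real.negMulLog (p x)) :=
  stmt16_general Q hQpos p hp hp1 y
end
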